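/- Let A be a commutative ring, M a finitely generated A-module, and Φ : M → M an A-linear endomorphism. If the induced endomorphism Φ_red of M/(nil(A)·M) over A/nil(A) is surjective, then Φ itself is surjective. -/

import Mathlib

theorem nilradical_le_jacobson_bot (R : Type*) [CommRing R] :
    nilradical R ≤ (⊥ : Ideal R).jacobson :=
  Ideal.jacobson_bot (R := R) ▸ nilradical_le_jacobson R

theorem LinearMap.surjective_of_surjective_mapQ_of_le_jacobson_bot
    {R M N : Type*} [CommRing R] [AddCommGroup M] [Module R M] [AddCommGroup N] [Module R N]
    [Module.Finite R N] {I : Ideal R} (hI : I ≤ (⊥ : Ideal R).jacobson)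
    {p : Submodule R M} (f : M →ₗ[R] N) (hf : p ≤ (I • (⊤ : Submodule R N)).comap f)
    (hsurj : Function.Surjective (p.mapQ (I • ⊤) f hf)) :
    Function.Surjective f := by
  refine f.surjective_of_surjective_comp_mkQ I hI ?_
  rw [← Submodule.mapQ_mkQ p _ f (h := hf), LinearMap.coe_comp]
  exact hsurj.comp p.mkQ_surjective

/-- Let `A` be a commutative ring, `M` a finitely generated `A`-module,
and `Φ : M → M` an `A`-linear endomorphism. If the induced endomorphism `Φ_red` of
`M/(nil(A)·M)` is surjective, then `Φ` itself is surjective.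
Here the induced map is `Submodule.mapQ` of `Φ` on the quotient `M ⧸ nil(A) • M`. -/
theorem surjective_of_reduction_surjective
    {A M : Type*} [CommRing A] [AddCommGroup M] [Module A M] [Module.Finite A M]
    (Φ : M →ₗ[A] M)
    (hred : Function.Surjective
      (Submodule.mapQ ((nilradical A) • (⊤ : Submodule A M))
        ((nilradical A) • (⊤ : Submodule A M)) Φ
        (Submodule.map_le_iff_le_comap.mp
          ((Submodule.map_smul'' (nilradical A) (⊤ : Submodule A M) Φ).le.trans
            (smul_mono_right (nilradical A) le_top))))) :
    Function.Surjective Φ :=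
  Φ.surjective_of_surjective_mapQ_of_le_jacobson_bot (nilradical_le_jacobson_bot A) _ hred
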